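/- Suppose vectors g_1,…,g_n ∈ ℝ^d satisfy ‖g_j‖ ≤ L for all j ≠ m and n ≥ 4. If Σ_ℓ g_ℓ = 0 and ‖g_m‖ > L√(n), then S_m = n²‖g_m‖² > (1/n)Σ_j S_j = n Σ_j ‖g_j‖², i.e., the malicious score strictly dominates the neighborhood average score. -/

import Mathlib

/-- If `n ≥ 4`, `∑ ℓ, g ℓ = 0`, `‖g j‖ ≤ L` for all `j ≠ m`, and
`‖g m‖ > L √n`, then `S m = n² ‖g m‖²` strictly dominates the neighborhood
average score `(1/n) ∑ j, S j = n ∑ j ‖g j‖²`. -/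
theorem stmt6 {d n : ℕ} (hn : 4 ≤ n) (L : ℝ) (hL : 0 < L)
    (g : Fin n → EuclideanSpace ℝ (Fin d)) (hsum : ∑ ℓ, g ℓ = 0)
    (m : Fin n) (hbd : ∀ j, j ≠ m → ‖g j‖ ≤ L)
    (hm : ‖g m‖ > L * Real.sqrt n)
    (S : Fin n → ℝ)
    (hS : ∀ j, S j = ‖∑ ℓ ∈ Finset.univ.erase j, (g ℓ - g j)‖ ^ 2) :
    S m = (n : ℝ) ^ 2 * ‖g m‖ ^ 2 ∧
      (1 / (n : ℝ)) * ∑ j, S j = (n : ℝ) * ∑ j, ‖g j‖ ^ 2 ∧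
      S m > (1 / (n : ℝ)) * ∑ j, S j := by
  have hn0 : (0:ℝ) < (n:ℝ) := by positivity
  have key : ∀ j, S j = (n : ℝ) ^ 2 * ‖g j‖ ^ 2 := by
    intro j
    have hcard : (Finset.univ.erase j).card = n - 1 := by
      simp [Finset.card_erase_of_mem]
    have h1 : ∑ ℓ ∈ Finset.univ.erase j, (g ℓ - g j) = (-(n:ℝ)) • g j := by
      rw [Finset.sum_sub_distrib, Finset.sum_const, hcard,
        Finset.sum_erase_eq_sub (Finset.mem_univ j), hsum,
        ← Nat.cast_smul_eq_nsmul ℝ]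
      have hcast : ((n - 1 : ℕ) : ℝ) = (n : ℝ) - 1 := by
        have : 1 ≤ n := by omega
        push_cast [this]; ring
      rw [hcast]
      module
    rw [hS, h1, norm_smul, Real.norm_eq_abs, abs_neg,
      abs_of_nonneg (le_of_lt hn0), mul_pow]
  have hsumS : ∑ j, S j = (n:ℝ)^2 * ∑ j, ‖g j‖ ^ 2 := by
    rw [Finset.mul_sum]
    exact Finset.sum_congr rfl fun j _ => key j
  refine ⟨key m, ?_, ?_⟩
  · rw [hsumS]
    field_simp
  · rw [key m, hsumS]
    have hsq : ‖g m‖ ^ 2 > L ^ 2 * n := by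
      have h := pow_lt_pow_left₀ hm (by positivity) (two_ne_zero)
      calc L ^ 2 * n = (L * Real.sqrt n) ^ 2 := by
            rw [mul_pow, Real.sq_sqrt (le_of_lt hn0)]
        _ < ‖g m‖ ^ 2 := h
    have hsplit : ∑ j, ‖g j‖ ^ 2
        = ‖g m‖ ^ 2 + ∑ j ∈ Finset.univ.erase m, ‖g j‖ ^ 2 := by
      rw [← Finset.add_sum_erase _ _ (Finset.mem_univ m)]
    have hrest : ∑ j ∈ Finset.univ.erase m, ‖g j‖ ^ 2 ≤ ((n:ℝ) - 1) * L ^ 2 := by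
      have := Finset.sum_le_card_nsmul (Finset.univ.erase m)
        (fun j => ‖g j‖ ^ 2) (L ^ 2)
        (fun j hj => by
          have hjm : j ≠ m := Finset.ne_of_mem_erase hj
          exact pow_le_pow_left₀ (norm_nonneg _) (hbd j hjm) 2)
      rw [Finset.card_erase_of_mem (Finset.mem_univ m), Finset.card_univ,
        Fintype.card_fin, nsmul_eq_mul] at this
      have hcast : ((n - 1 : ℕ) : ℝ) = (n : ℝ) - 1 := by
        have h1 : 1 ≤ n := by omega
        push_cast [h1]; ring
      rw [hcast] at this; exact this
    rw [hsplit]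
    have hn4 : (4:ℝ) ≤ (n:ℝ) := by exact_mod_cast hn
    have hL2 : (0:ℝ) < L ^ 2 := by positivity
    have heq : (1/(n:ℝ)) * ((n:ℝ)^2 * (‖g m‖^2 + ∑ j ∈ Finset.univ.erase m, ‖g j‖ ^ 2))
        = (n:ℝ) * (‖g m‖^2 + ∑ j ∈ Finset.univ.erase m, ‖g j‖ ^ 2) := by
      field_simp
    rw [heq]
    have h3 : (0:ℝ) < (n:ℝ) - 1 := by linarith
    nlinarith [mul_le_mul_of_nonneg_left hrest hn0.le,
      mul_lt_mul_of_pos_left hsq h3, sq_nonneg ‖g m‖,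
      mul_nonneg (mul_nonneg h3.le h3.le) (sq_nonneg ‖g m‖)]
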